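/- For all reals a > 0 and b > 0: ∫₀¹ x^{a−1} (1−x)^{b−1} (log x)² dx = B(a,b) · [ (ψ₀(a) − ψ₀(a+b))² + ψ₁(a) − ψ₁(a+b) ]. -/

import Mathlib

/-!
Differentiating `B(s, b) = ∫₀¹ x^{s-1} (1-x)^{b-1} dx` under the integral sign in `s` brings down
a factor `log x`, so the `k`-th logarithmic moment of the Beta integrand is `∂ₛᵏ B(s, b)`; the
bound `|log x|ᵏ ≤ C x^{-ε}` on `(0, 1]` provides the domination. Writing
`B = Γ(s) Γ(b) / Γ(s+b)` gives `∂ₛ B = B (ψ₀(s) - ψ₀(s+b))`, and one more derivative yields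
`B ((ψ₀(s) - ψ₀(s+b))² + ψ₁(s) - ψ₁(s+b))`.
-/

open MeasureTheory Real

/-- The digamma function `ψ₀(x) = d/dx log Γ(x)`. -/
noncomputable def digamma (x : ℝ) : ℝ := deriv (fun y => Real.log (Real.Gamma y)) x

/-- The trigamma function `ψ₁ = ψ₀′`. -/
noncomputable def trigamma (x : ℝ) : ℝ := deriv digamma x

/-- The Beta function `B(a,b) = Γ(a)Γ(b)/Γ(a+b)`. -/
noncomputable def betaFn (a b : ℝ) : ℝ := Real.Gamma a * Real.Gamma b / Real.Gamma (a + b)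

open Set Topology

/- `trigamma` needs `log ∘ Γ` twice differentiable; real analyticity is inherited from the
holomorphy of `Complex.Gamma` on the right half-plane. -/
theorem analyticOnNhd_Gamma_Ioi : AnalyticOnNhd ℝ Gamma (Ioi 0) := by
  intro x hx
  have hℂ : AnalyticAt ℂ Complex.Gamma (x : ℂ) := by
    have hopen : IsOpen {s : ℂ | 0 < s.re} := isOpen_lt continuous_const Complex.continuous_re
    refine DifferentiableOn.analyticAt (fun s hs => (Complex.differentiableAt_Gamma s
      fun m hm => ?_).differentiableWithinAt) (hopen.mem_nhds (by simpa using hx))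
    have : (0 : ℝ) < -m := by simpa [hm] using hs
    linarith [(Nat.cast_nonneg m : (0 : ℝ) ≤ m)]
  have hre := (Complex.reCLM.analyticAt _).comp
    (hℂ.restrictScalars.comp (Complex.ofRealCLM.analyticAt x))
  simpa [Function.comp_def, Complex.Gamma_ofReal] using hre

theorem analyticOnNhd_digamma : AnalyticOnNhd ℝ digamma (Ioi 0) :=
  (analyticOnNhd_Gamma_Ioi.log fun _ hx => Gamma_pos_of_pos hx).deriv

theorem hasDerivAt_log_Gamma {x : ℝ} (hx : 0 < x) :
    HasDerivAt (fun y => log (Gamma y)) (digamma x) x :=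
  ((analyticOnNhd_Gamma_Ioi x hx).log (Gamma_pos_of_pos hx)).differentiableAt.hasDerivAt

theorem hasDerivAt_digamma {x : ℝ} (hx : 0 < x) : HasDerivAt digamma (trigamma x) x :=
  (analyticOnNhd_digamma x hx).differentiableAt.hasDerivAt

theorem hasDerivAt_Gamma {x : ℝ} (hx : 0 < x) : HasDerivAt Gamma (Gamma x * digamma x) x := by
  have hexp := (hasDerivAt_log_Gamma hx).exp
  rw [exp_log (Gamma_pos_of_pos hx)] at hexp
  refine hexp.congr_of_eventuallyEq ?_
  filter_upwards [isOpen_Ioi.mem_nhds hx] with y hy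
  exact (exp_log (Gamma_pos_of_pos hy)).symm

theorem hasDerivAt_betaFn_left {s b : ℝ} (hs : 0 < s) (hb : 0 < b) :
    HasDerivAt (betaFn · b) (betaFn s b * (digamma s - digamma (s + b))) s := by
  have hsb : 0 < s + b := add_pos hs hb
  have hΓsb : Gamma (s + b) ≠ 0 := (Gamma_pos_of_pos hsb).ne'
  have hquot := ((hasDerivAt_Gamma hs).mul_const (Gamma b)).div
    (hasDerivAt_Gamma hsb).comp_add_const hΓsb
  refine hquot.congr_deriv ?_
  unfold betaFn
  field_simp

theorem abs_log_pow_le {x t : ℝ} (hx0 : 0 < x) (hx1 : x ≤ 1) (ht : 0 < t) (k : ℕ) :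
    |log x| ^ k ≤ (t ^ k)⁻¹ * x ^ (-(t * k)) := by
  have hlog : |log x| ≤ t⁻¹ * x ^ (-t) := by
    have := abs_log_mul_self_rpow_lt x t hx0 hx1 ht
    rw [abs_mul, abs_of_pos (rpow_pos_of_pos hx0 t),
      ← lt_div_iff₀ (rpow_pos_of_pos hx0 t)] at this
    rw [rpow_neg hx0.le]
    exact this.le.trans_eq (by ring)
  calc |log x| ^ k ≤ (t⁻¹ * x ^ (-t)) ^ k := pow_le_pow_left₀ (abs_nonneg _) hlog k
    _ = (t ^ k)⁻¹ * x ^ (-(t * k)) := by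
      rw [mul_pow, inv_pow, ← rpow_natCast (x ^ (-t)), ← rpow_mul hx0.le, neg_mul]

theorem betaIntegrand_ofReal {s b x : ℝ} (hx : x ∈ Ioo (0 : ℝ) 1) :
    (x : ℂ) ^ ((s : ℂ) - 1) * (1 - (x : ℂ)) ^ ((b : ℂ) - 1)
      = ((x ^ (s - 1) * (1 - x) ^ (b - 1) : ℝ) : ℂ) := by
  rw [Complex.ofReal_mul, Complex.ofReal_cpow hx.1.le, Complex.ofReal_cpow (sub_nonneg.2 hx.2.le)]
  push_cast
  rfl

theorem integrableOn_betaIntegrand {s b : ℝ} (hs : 0 < s) (hb : 0 < b) :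
    IntegrableOn (fun x : ℝ => x ^ (s - 1) * (1 - x) ^ (b - 1)) (Ioo 0 1) := by
  have hℂ := Complex.betaIntegral_convergent (u := s) (v := b) (by simpa) (by simpa)
  rw [intervalIntegrable_iff_integrableOn_Ioo_of_le zero_le_one] at hℂ
  refine IntegrableOn.congr_fun hℂ.re (fun x hx => ?_) measurableSet_Ioo
  simp only [betaIntegrand_ofReal hx, RCLike.re_to_complex, Complex.ofReal_re]

theorem integral_betaIntegrand {s b : ℝ} (hs : 0 < s) (hb : 0 < b) :
    ∫ x in Ioo (0 : ℝ) 1, x ^ (s - 1) * (1 - x) ^ (b - 1) = betaFn s b := by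
  have hB : Complex.betaIntegral s b
      = ∫ x in Ioo (0 : ℝ) 1, x ^ (s - 1) * (1 - x) ^ (b - 1) := by
    rw [Complex.betaIntegral, intervalIntegral.integral_of_le zero_le_one,
      integral_Ioc_eq_integral_Ioo, ← integral_complex_ofReal]
    exact setIntegral_congr_fun measurableSet_Ioo fun x hx => betaIntegrand_ofReal hx
  change _ = ProbabilityTheory.beta s b
  rw [ProbabilityTheory.beta_eq_betaIntegralReal s b hs hb, hB, Complex.ofReal_re]

theorem integrableOn_betaIntegrand_mul_log_pow {s b : ℝ} (hs : 0 < s) (hb : 0 < b) (k : ℕ) :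
    IntegrableOn (fun x : ℝ => x ^ (s - 1) * (1 - x) ^ (b - 1) * log x ^ k) (Ioo 0 1) := by
  -- `t` is chosen so that `x ^ (s - 1) * x ^ (-(t * k)) = x ^ (t - 1)` is still integrable.
  set t := s / (k + 1)
  have ht : 0 < t := by positivity
  refine ((integrableOn_betaIntegrand ht hb).const_mul (t ^ k)⁻¹).mono' (by fun_prop) ?_
  filter_upwards [ae_restrict_mem measurableSet_Ioo] with x hx
  have hx0 := hx.1
  have hpow : x ^ (s - 1) * x ^ (-(t * k)) = x ^ (t - 1) := by
    rw [← rpow_add hx0]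
    congr 1
    simp only [t]
    field_simp
    ring
  rw [norm_mul, norm_mul, norm_pow, Real.norm_eq_abs, Real.norm_eq_abs, Real.norm_eq_abs,
    abs_of_pos (rpow_pos_of_pos hx0 _), abs_of_nonneg (rpow_nonneg (sub_nonneg.2 hx.2.le) _)]
  calc x ^ (s - 1) * (1 - x) ^ (b - 1) * |log x| ^ k
      ≤ x ^ (s - 1) * (1 - x) ^ (b - 1) * ((t ^ k)⁻¹ * x ^ (-(t * k))) :=
        mul_le_mul_of_nonneg_left (abs_log_pow_le hx0 hx.2.le ht k)
          (mul_nonneg (rpow_pos_of_pos hx0 _).le (rpow_nonneg (sub_nonneg.2 hx.2.le) _))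
    _ = (t ^ k)⁻¹ * (x ^ (t - 1) * (1 - x) ^ (b - 1)) := by rw [← hpow]; ring

noncomputable def betaLogMoment (k : ℕ) (s b : ℝ) : ℝ :=
  ∫ x in Ioo (0 : ℝ) 1, x ^ (s - 1) * (1 - x) ^ (b - 1) * log x ^ k

theorem betaLogMoment_zero {s b : ℝ} (hs : 0 < s) (hb : 0 < b) :
    betaLogMoment 0 s b = betaFn s b := by
  simpa [betaLogMoment] using integral_betaIntegrand hs hb

theorem hasDerivAt_betaLogMoment {s b : ℝ} (hs : 0 < s) (hb : 0 < b) (k : ℕ) :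
    HasDerivAt (betaLogMoment k · b) (betaLogMoment (k + 1) s b) s := by
  have hF' : ∀ x ∈ Ioo (0 : ℝ) 1, ∀ r : ℝ, HasDerivAt
      (fun r => x ^ (r - 1) * (1 - x) ^ (b - 1) * log x ^ k)
      (x ^ (r - 1) * (1 - x) ^ (b - 1) * log x ^ (k + 1)) r := by
    intro x hx r
    have := (((hasStrictDerivAt_const_rpow hx.1 (r - 1)).hasDerivAt.comp r
      ((hasDerivAt_id r).sub_const 1)).mul_const ((1 - x) ^ (b - 1))).mul_const (log x ^ k)
    exact this.congr_deriv (by ring)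
  have hbound : ∀ x ∈ Ioo (0 : ℝ) 1, ∀ r ∈ Metric.ball s (s / 2),
      ‖x ^ (r - 1) * (1 - x) ^ (b - 1) * log x ^ (k + 1)‖
        ≤ ‖x ^ (s / 2 - 1) * (1 - x) ^ (b - 1) * log x ^ (k + 1)‖ := by
    intro x hx r hr
    rw [Metric.mem_ball, Real.dist_eq, abs_sub_lt_iff] at hr
    simp only [norm_mul]
    gcongr
    rw [Real.norm_eq_abs, Real.norm_eq_abs, abs_of_pos (rpow_pos_of_pos hx.1 _),
      abs_of_pos (rpow_pos_of_pos hx.1 _)]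
    exact rpow_le_rpow_of_exponent_ge hx.1 hx.2.le (by linarith [hr.2])
  exact (hasDerivAt_integral_of_dominated_loc_of_deriv_le (μ := volume.restrict (Ioo 0 1))
    (F := fun r x => x ^ (r - 1) * (1 - x) ^ (b - 1) * log x ^ k)
    (Metric.ball_mem_nhds s (half_pos hs)) (.of_forall fun r => by fun_prop)
    (integrableOn_betaIntegrand_mul_log_pow hs hb k) (by fun_prop)
    ((ae_restrict_mem measurableSet_Ioo).mono hbound)
    (integrableOn_betaIntegrand_mul_log_pow (half_pos hs) hb (k + 1)).norm
    ((ae_restrict_mem measurableSet_Ioo).mono fun x hx r _ => hF' x hx r)).2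

theorem betaLogMoment_one {s b : ℝ} (hs : 0 < s) (hb : 0 < b) :
    betaLogMoment 1 s b = betaFn s b * (digamma s - digamma (s + b)) := by
  have hmoment₀ : (betaFn · b) =ᶠ[𝓝 s] (betaLogMoment 0 · b) := by
    filter_upwards [isOpen_Ioi.mem_nhds hs] with r hr
    exact (betaLogMoment_zero hr hb).symm
  exact ((hasDerivAt_betaLogMoment hs hb 0).congr_of_eventuallyEq hmoment₀).unique
    (hasDerivAt_betaFn_left hs hb)

/-- For `a, b > 0`,
`∫₀¹ x^{a−1} (1−x)^{b−1} (log x)² dx = B(a,b) [(ψ₀(a) − ψ₀(a+b))² + ψ₁(a) − ψ₁(a+b)]`. -/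
theorem beta_log_sq_integral (a b : ℝ) (ha : 0 < a) (hb : 0 < b) :
    ∫ x in Set.Ioo (0 : ℝ) 1, x ^ (a - 1) * (1 - x) ^ (b - 1) * (Real.log x) ^ 2
      = betaFn a b * ((digamma a - digamma (a + b)) ^ 2 + trigamma a - trigamma (a + b)) := by
  have hmoment₁ : (fun s => betaFn s b * (digamma s - digamma (s + b))) =ᶠ[𝓝 a]
      (betaLogMoment 1 · b) := by
    filter_upwards [isOpen_Ioi.mem_nhds ha] with s hs
    exact (betaLogMoment_one hs hb).symm
  have hderiv := (hasDerivAt_betaFn_left ha hb).mul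
    ((hasDerivAt_digamma ha).sub (hasDerivAt_digamma (add_pos ha hb)).comp_add_const)
  have hmoment₂ :=
    ((hasDerivAt_betaLogMoment ha hb 1).congr_of_eventuallyEq hmoment₁).unique hderiv
  change betaLogMoment 2 a b = _
  rw [hmoment₂, Pi.sub_apply]
  ring
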